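/- arXiv:math/0010220 — 3 statements merged into one kernel-verified Lean document; each statement's English description precedes it below -/
import Mathlib

section
/- For a balanced Boolean function f on Z_2^n (n ≥ 3), the sum-of-squares indicator satisfies σ_f = 2^{2n} + 2^6 ∑_{x ≠ 0} (b_x - 2^{n-3})^2, where b_x = (1/2) ∑_y f(y) f(y ⊕ x). -/
open Finset

/-- `(-1)^{f(x)}` as an integer. -/
def bhat {n : ℕ} (f : (Fin n → ZMod 2) → ZMod 2) (x : Fin n → ZMod 2) : ℤ :=
  (-1) ^ (f x).val

/-- Autocorrelation `Δ_f(α) = ∑_x (-1)^{f(x)} (-1)^{f(x ⊕ α)}`. -/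
def autocorr {n : ℕ} (f : (Fin n → ZMod 2) → ZMod 2) (a : Fin n → ZMod 2) : ℤ :=
  ∑ x : Fin n → ZMod 2, bhat f x * bhat f (x + a)

/-- `b_x = (1/2) ∑_y f(y) f(y ⊕ x)`, with the `0/1` values taken in `ℚ`. -/
def bcoef {n : ℕ} (f : (Fin n → ZMod 2) → ZMod 2) (x : Fin n → ZMod 2) : ℚ :=
  (1 / 2) * ∑ y : Fin n → ZMod 2, ((f y).val : ℚ) * ((f (y + x)).val : ℚ)

/-- `f` takes the value `1` exactly `2^{n-1}` times. -/
def IsBalancedBF {n : ℕ} (f : (Fin n → ZMod 2) → ZMod 2) : Prop :=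
  (Finset.univ.filter fun x => f x = 1).card = 2 ^ (n - 1)

/-- Sum-of-squares indicator `σ_f`. -/
def sos {n : ℕ} (f : (Fin n → ZMod 2) → ZMod 2) : ℤ :=
  ∑ a : Fin n → ZMod 2, (autocorr f a) ^ 2

/- Since `(-1)^u = 1 - 2u` for `u ∈ {0, 1}`, expanding `Δ_f(α)` gives
`2^n - 2 wt(f) - 2 wt(f(· ⊕ α)) + 8 b_α`, and for balanced `f` both weights are `2^{n-1}`.
Hence `Δ_f(α) = 8 (b_α - 2^{n-3})`, while `Δ_f(0) = 2^n`; summing squares gives the formula. -/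

lemma ZMod.eq_zero_or_eq_one (a : ZMod 2) : a = 0 ∨ a = 1 := by
  fin_cases a
  · exact Or.inl rfl
  · exact Or.inr rfl

lemma bhat_eq_one_sub_two_mul_val {n : ℕ} (f : (Fin n → ZMod 2) → ZMod 2)
    (x : Fin n → ZMod 2) : (bhat f x : ℚ) = 1 - 2 * ((f x).val : ℚ) := by
  rcases ZMod.eq_zero_or_eq_one (f x) with h | h <;> norm_num [bhat, h, ZMod.val_one]

lemma IsBalancedBF.sum_val {n : ℕ} {f : (Fin n → ZMod 2) → ZMod 2} (hf : IsBalancedBF f) :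
    ∑ x, ((f x).val : ℚ) = 2 ^ (n - 1) := by
  have hval : ∀ x, ((f x).val : ℚ) = if f x = 1 then 1 else 0 := fun x => by
    rcases ZMod.eq_zero_or_eq_one (f x) with h | h <;> norm_num [h, ZMod.val_one]
  rw [Finset.sum_congr rfl fun x _ => hval x, Finset.sum_boole, hf]
  push_cast
  rfl

lemma IsBalancedBF.sum_val_add_right {n : ℕ} {f : (Fin n → ZMod 2) → ZMod 2}
    (hf : IsBalancedBF f) (a : Fin n → ZMod 2) :
    ∑ x, ((f (x + a)).val : ℚ) = 2 ^ (n - 1) :=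
  (Equiv.sum_comp (Equiv.addRight a) fun x => ((f x).val : ℚ)).trans hf.sum_val

lemma autocorr_zero {n : ℕ} (f : (Fin n → ZMod 2) → ZMod 2) : autocorr f 0 = 2 ^ n := by
  have hsq : ∀ x, bhat f x * bhat f (x + 0) = 1 := fun x => by
    rw [add_zero, bhat, ← pow_add, ← two_mul, pow_mul]
    norm_num
  simp only [autocorr, hsq, Finset.sum_const, Finset.card_univ, Fintype.card_pi, ZMod.card,
    Finset.prod_const, Fintype.card_fin, nsmul_eq_mul, mul_one]
  norm_cast

lemma IsBalancedBF.autocorr_eq {n : ℕ} (hn : 1 ≤ n) {f : (Fin n → ZMod 2) → ZMod 2}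
    (hf : IsBalancedBF f) (a : Fin n → ZMod 2) :
    (autocorr f a : ℚ) = 8 * bcoef f a - 2 ^ n := by
  have hpow : (2 : ℚ) * 2 ^ (n - 1) = 2 ^ n := by
    rw [← pow_succ', Nat.sub_add_cancel hn]
  set u : (Fin n → ZMod 2) → ℚ := fun x => ((f x).val : ℚ)
  calc (autocorr f a : ℚ)
      = ∑ x, (1 - 2 * u x - 2 * u (x + a) + 4 * (u x * u (x + a))) := by
        simp only [autocorr, Int.cast_sum, Int.cast_mul, bhat_eq_one_sub_two_mul_val]
        exact Finset.sum_congr rfl fun x _ => by ring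
    _ = 2 ^ n - 2 * ∑ x, u x - 2 * ∑ x, u (x + a) + 4 * ∑ x, u x * u (x + a) := by
        simp [Finset.sum_add_distrib, Finset.sum_sub_distrib, Finset.mul_sum]
    _ = 8 * bcoef f a - 2 ^ n := by
        rw [hf.sum_val, hf.sum_val_add_right, bcoef]
        linear_combination (-2 : ℚ) * hpow

theorem sos_eq_balanced {n : ℕ} (hn : 3 ≤ n) (f : (Fin n → ZMod 2) → ZMod 2)
    (hf : IsBalancedBF f) :
    (sos f : ℚ) =
      2 ^ (2 * n) +
        2 ^ 6 * ∑ x ∈ Finset.univ.filter (fun x : Fin n → ZMod 2 => x ≠ 0),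
          (bcoef f x - 2 ^ (n - 3)) ^ 2 := by
  have hpow : (2 : ℚ) ^ n = 8 * 2 ^ (n - 3) := by
    rw [show (8 : ℚ) = 2 ^ 3 by norm_num, ← pow_add, Nat.add_sub_cancel' hn]
  have hsq : ∀ a, (autocorr f a : ℚ) ^ 2 = 2 ^ 6 * (bcoef f a - 2 ^ (n - 3)) ^ 2 := fun a => by
    rw [hf.autocorr_eq (by omega) a, hpow]
    ring
  calc (sos f : ℚ)
      = (autocorr f 0 : ℚ) ^ 2 + ∑ a ∈ univ.erase 0, (autocorr f a : ℚ) ^ 2 := by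
        rw [sos, Int.cast_sum, ← Finset.add_sum_erase _ _ (Finset.mem_univ 0)]
        push_cast
        rfl
    _ = _ := by
        rw [autocorr_zero, Finset.filter_ne', Finset.mul_sum, Finset.sum_congr rfl fun a _ => hsq a]
        push_cast
        ring
end

section
/- Let h : Z_2^{n-1} → Z_2 be arbitrary, g(x) = x_1 ⊕ ⋯ ⊕ x_{n-1} ⊕ b for fixed b ∈ Z_2, and f : Z_2^n → Z_2 the concatenation f = (h | h ⊕ g), i.e., f(x', 0) = h(x') and f(x', 1) = h(x') ⊕ g(x'). If x ∈ Z_2^n has most significant bit 0 and its projection x' ∈ Z_2^{n-1} has odd Hamming weight, then ∑_{y ∈ Z_2^n} (f(y) ⊕ f(y ⊕ x)) = 2^{n-1}. -/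
open Finset

/-- `(-1)^{f(x)}` as an integer, for functions on `Z_2^{m} × Z_2 ≅ Z_2^{m+1}`
(the second coordinate is the most significant bit). -/
def bhatP {m : ℕ} (f : (Fin m → ZMod 2) × ZMod 2 → ZMod 2)
    (x : (Fin m → ZMod 2) × ZMod 2) : ℤ :=
  (-1) ^ (f x).val

/-- Autocorrelation `Δ_f(α)`. -/
def autocorrP {m : ℕ} (f : (Fin m → ZMod 2) × ZMod 2 → ZMod 2)
    (a : (Fin m → ZMod 2) × ZMod 2) : ℤ :=
  ∑ x : (Fin m → ZMod 2) × ZMod 2, bhatP f x * bhatP f (x + a)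

/-- Hamming weight. -/
def wt {m : ℕ} (x' : Fin m → ZMod 2) : ℕ :=
  (Finset.univ.filter fun i => x' i = 1).card


lemma sum_coords_eq_one {m : ℕ} (x' : Fin m → ZMod 2) (hx : Odd (wt x')) :
    (∑ i, x' i) = 1 := by
  have h1 : (∑ i, x' i) = ∑ i, (if x' i = 1 then (1 : ZMod 2) else 0) := by
    apply Finset.sum_congr rfl
    intro i _
    rcases (by decide : ∀ c : ZMod 2, c = 0 ∨ c = 1) (x' i) with hc | hc <;> simp [hc]
  rw [h1, Finset.sum_boole]
  have : ((wt x' : ℕ) : ZMod 2) = 1 := by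
    obtain ⟨k, hk⟩ := hx
    rw [hk]
    push_cast
    have h2 : (2 : ZMod 2) = 0 := rfl
    rw [h2]; ring
  exact this

theorem concat_odd_weight_sum {m : ℕ} (hm : 1 ≤ m)
    (h : (Fin m → ZMod 2) → ZMod 2) (b : ZMod 2)
    (f : (Fin m → ZMod 2) × ZMod 2 → ZMod 2)
    (hf : ∀ (x' : Fin m → ZMod 2) (ε : ZMod 2),
      f (x', ε) = h x' + ε * ((∑ i, x' i) + b))
    (x' : Fin m → ZMod 2) (hx : Odd (wt x')) :
    ∑ y : (Fin m → ZMod 2) × ZMod 2, ((f y + f (y + (x', 0))).val : ℤ) = 2 ^ m := by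
  have hs : (∑ i, x' i) = 1 := sum_coords_eq_one x' hx
  have key : ∀ (y' : Fin m → ZMod 2) (ε : ZMod 2),
      f (y', ε) + f ((y', ε) + (x', 0)) = (h y' + h (y' + x')) + ε := by
    intro y' ε
    have : (y', ε) + (x', (0 : ZMod 2)) = (y' + x', ε) := by
      simp [Prod.ext_iff]
    rw [this, hf, hf]
    have hsum : (∑ i, (y' + x') i) = (∑ i, y' i) + 1 := by
      simp only [Pi.add_apply, Finset.sum_add_distrib, hs]
    rw [hsum]
    have h2 : (2 : ZMod 2) = 0 := rfl
    ring_nf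
    rw [h2]; ring
  rw [Fintype.sum_prod_type]
  have inner : ∀ c : ZMod 2, (∑ ε : ZMod 2, (((c + ε).val : ℤ))) = 1 := by decide
  have : ∀ y' : Fin m → ZMod 2,
      (∑ ε : ZMod 2, ((f (y', ε) + f ((y', ε) + (x', 0))).val : ℤ)) = 1 := by
    intro y'
    simp only [key]
    exact inner _
  rw [Finset.sum_congr rfl (fun y' _ => this y')]
  simp [Finset.card_univ]
end

section
/- For any Boolean function f on Z_2^n, the nonlinearity satisfies N_f ≤ 2^{n-1} - (1/2)·√(σ_f / 2^n), equivalently σ_f ≤ 2^n (2^n - 2 N_f)^2. -/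
/-!
Write `W_f(c) = ∑_x (-1)^{f(x) + c·x}` for the Walsh transform of `f`. Parseval gives
`∑_c W_f(c)² = 2^{2n}`, and by Wiener–Khinchin `W_f²` is the Walsh transform of the
autocorrelation, so Parseval applied once more gives
`2^n σ_f = ∑_c W_f(c)⁴ ≤ 2^{2n} max_c W_f(c)²`. Finally `±W_f(c) = 2^n - 2 d(f, ℓ)` for the
two affine functions `ℓ = c·x` and `ℓ = c·x ⊕ 1`, whence `W_f(c)² ≤ (2^n - 2 N_f)²`.
-/

open Finset

/-- Nonlinearity: the minimum Hamming distance from `f` to the affine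
functions `x ↦ c·x ⊕ c₀`. -/
def nonlinearity {n : ℕ} (f : (Fin n → ZMod 2) → ZMod 2) : ℕ :=
  Finset.univ.inf' Finset.univ_nonempty
    fun p : (Fin n → ZMod 2) × ZMod 2 =>
      (Finset.univ.filter fun x => f x ≠ (∑ i, p.1 i * x i) + p.2).card

namespace BooleanFunction

def signChar : AddChar (ZMod 2) ℤ where
  toFun a := (-1) ^ a.val
  map_zero_eq_one' := rfl
  map_add_eq_mul' := by decide

lemma signChar_mul_signChar (a b : ZMod 2) :
    signChar a * signChar b = 1 - 2 * if a ≠ b then 1 else 0 := by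
  revert a b; decide

lemma signChar_add_one (a : ZMod 2) : signChar (a + 1) = -signChar a := by
  revert a; decide

lemma signChar_sq (a : ZMod 2) : signChar a ^ 2 = 1 := by
  revert a; decide

lemma signChar_eq_one_iff (a : ZMod 2) : signChar a = 1 ↔ a = 0 := by
  revert a; decide

lemma sum_signChar_mul_signChar {ι : Type*} [Fintype ι] (f g : ι → ZMod 2) :
    ∑ i, signChar (f i) * signChar (g i) = Fintype.card ι - 2 * (hammingDist f g : ℤ) := by
  simp_rw [signChar_mul_signChar, sum_sub_distrib, ← mul_sum, sum_boole, hammingDist]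
  simp

variable {n : ℕ}

lemma bhat_eq_signChar (f : (Fin n → ZMod 2) → ZMod 2) (x : Fin n → ZMod 2) :
    bhat f x = signChar (f x) := rfl

def walshChar (c : Fin n → ZMod 2) : AddChar (Fin n → ZMod 2) ℤ where
  toFun x := signChar (c ⬝ᵥ x)
  map_zero_eq_one' := by simp
  map_add_eq_mul' x y := by simp [dotProduct_add, AddChar.map_add_eq_mul]

lemma walshChar_apply (c x : Fin n → ZMod 2) : walshChar c x = signChar (c ⬝ᵥ x) := rfl

lemma walshChar_comm (c x : Fin n → ZMod 2) : walshChar c x = walshChar x c := by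
  rw [walshChar_apply, walshChar_apply, dotProduct_comm]

lemma walshChar_eq_zero_iff (y : Fin n → ZMod 2) : walshChar y = 0 ↔ y = 0 := by
  refine ⟨fun hy => funext fun j => ?_, fun hy => ?_⟩
  · have := DFunLike.congr_fun hy (Pi.single j 1)
    rwa [walshChar_apply, dotProduct_single_one, AddChar.zero_apply, signChar_eq_one_iff] at this
  · ext x; simp [hy, walshChar_apply]

lemma sum_walshChar (y : Fin n → ZMod 2) :
    ∑ c, walshChar c y = if y = 0 then 2 ^ n else 0 := by
  simp_rw [walshChar_comm _ y, AddChar.sum_eq_ite, walshChar_eq_zero_iff]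
  simp

/-- Parseval's identity. -/
lemma sum_sq_sum_mul_walshChar (g : (Fin n → ZMod 2) → ℤ) :
    ∑ c, (∑ a, g a * walshChar c a) ^ 2 = 2 ^ n * ∑ a, g a ^ 2 := by
  have orthogonality (a b : Fin n → ZMod 2) :
      ∑ c, walshChar c a * walshChar c b = if a = b then 2 ^ n else 0 := by
    simp_rw [← AddChar.map_add_eq_mul, sum_walshChar, ← ZModModule.sub_eq_add, sub_eq_zero]
  calc ∑ c, (∑ a, g a * walshChar c a) ^ 2
      = ∑ a, ∑ b, g a * g b * ∑ c, walshChar c a * walshChar c b := by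
        simp_rw [sq, sum_mul_sum, mul_sum]
        rw [sum_comm]
        refine sum_congr rfl fun a _ => ?_
        rw [sum_comm]
        exact sum_congr rfl fun b _ => sum_congr rfl fun c _ => by ring
    _ = 2 ^ n * ∑ a, g a ^ 2 := by
        simp_rw [orthogonality, mul_ite, mul_zero, sum_ite_eq, mem_univ, if_true, mul_sum]
        exact sum_congr rfl fun a _ => by ring

def walsh (f : (Fin n → ZMod 2) → ZMod 2) (c : Fin n → ZMod 2) : ℤ :=
  ∑ x, bhat f x * walshChar c x

/-- The Wiener–Khinchin theorem. -/
lemma sum_autocorr_mul_walshChar (f : (Fin n → ZMod 2) → ZMod 2) (c : Fin n → ZMod 2) :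
    ∑ a, autocorr f a * walshChar c a = walsh f c ^ 2 := by
  have shift (x : Fin n → ZMod 2) : ∑ a, bhat f x * bhat f (x + a) * walshChar c a
      = ∑ y, bhat f x * walshChar c x * (bhat f y * walshChar c y) := by
    refine Fintype.sum_equiv (Equiv.addLeft x) _ _ fun a => ?_
    have hχ : walshChar c a = walshChar c x * walshChar c (x + a) := by
      rw [← AddChar.map_add_eq_mul, ← add_assoc, ZModModule.add_self, zero_add]
    rw [hχ, Equiv.coe_addLeft]; ring
  simp_rw [autocorr, sum_mul]
  rw [sum_comm]
  simp_rw [shift, sq, walsh, sum_mul_sum]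

lemma sum_walsh_sq (f : (Fin n → ZMod 2) → ZMod 2) : ∑ c, walsh f c ^ 2 = 2 ^ n * 2 ^ n := by
  simp [walsh, sum_sq_sum_mul_walshChar, bhat_eq_signChar, signChar_sq]

lemma sum_walsh_pow_four (f : (Fin n → ZMod 2) → ZMod 2) :
    ∑ c, walsh f c ^ 4 = 2 ^ n * sos f := by
  simp_rw [sos, ← sum_sq_sum_mul_walshChar, sum_autocorr_mul_walshChar, ← pow_mul]

lemma walsh_eq_card_sub_hammingDist (f : (Fin n → ZMod 2) → ZMod 2) (c : Fin n → ZMod 2) :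
    walsh f c = 2 ^ n - 2 * (hammingDist f fun x => c ⬝ᵥ x : ℤ) := by
  simp [walsh, bhat_eq_signChar, walshChar_apply, sum_signChar_mul_signChar]

lemma neg_walsh_eq_card_sub_hammingDist (f : (Fin n → ZMod 2) → ZMod 2) (c : Fin n → ZMod 2) :
    -walsh f c = 2 ^ n - 2 * (hammingDist f fun x => c ⬝ᵥ x + 1 : ℤ) := by
  simp_rw [walsh, bhat_eq_signChar, walshChar_apply, ← sum_neg_distrib, ← mul_neg,
    ← signChar_add_one, sum_signChar_mul_signChar]
  simp

lemma nonlinearity_le_hammingDist (f : (Fin n → ZMod 2) → ZMod 2) (c : Fin n → ZMod 2)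
    (c₀ : ZMod 2) : nonlinearity f ≤ hammingDist f fun x => c ⬝ᵥ x + c₀ :=
  inf'_le _ (mem_univ (c, c₀))

lemma walsh_sq_le (f : (Fin n → ZMod 2) → ZMod 2) (c : Fin n → ZMod 2) :
    walsh f c ^ 2 ≤ ((2 : ℤ) ^ n - 2 * (nonlinearity f : ℤ)) ^ 2 := by
  have h₀ := nonlinearity_le_hammingDist f c 0
  have h₁ := nonlinearity_le_hammingDist f c 1
  simp only [add_zero] at h₀
  apply sq_le_sq' <;> linarith [walsh_eq_card_sub_hammingDist f c,
    neg_walsh_eq_card_sub_hammingDist f c, (Nat.cast_le (α := ℤ)).2 h₀,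
    (Nat.cast_le (α := ℤ)).2 h₁]

end BooleanFunction

open BooleanFunction in
theorem sos_nonlinearity_bound {n : ℕ} (f : (Fin n → ZMod 2) → ZMod 2) :
    sos f ≤ 2 ^ n * ((2 : ℤ) ^ n - 2 * (nonlinearity f : ℤ)) ^ 2 := by
  set M := (2 : ℤ) ^ n - 2 * (nonlinearity f : ℤ)
  have h : 2 ^ n * sos f ≤ 2 ^ n * (2 ^ n * M ^ 2) :=
    calc 2 ^ n * sos f = ∑ c, walsh f c ^ 2 * walsh f c ^ 2 := by
          rw [← sum_walsh_pow_four]; simp_rw [← pow_add]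
      _ ≤ ∑ c, M ^ 2 * walsh f c ^ 2 :=
          sum_le_sum fun c _ => mul_le_mul_of_nonneg_right (walsh_sq_le f c) (sq_nonneg _)
      _ = 2 ^ n * (2 ^ n * M ^ 2) := by rw [← mul_sum, sum_walsh_sq]; ring
  exact le_of_mul_le_mul_left h (by positivity)
end
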